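/- Consider an uncertain LTI system with matrices A, B_w, B_d, C_v, D_vw, D_vd, C_e, D_ew, D_ed, and IQC filters Ψ₁ with state-space realization (A_ψ₁, B_ψ₁, C_ψ₁, D_ψ₁) and Ψ₂ with realization (A_ψ₂, B_ψ₂, C_ψ₂, D_ψ₂), where D_ψ₂ is invertible. Define the extended matrices Ã = [[A, 0, 0], [B_ψ₁ C_v, A_ψ₁, 0], [0, 0, A_ψ₂]], B̃_w = [[B_w], [B_ψ₁ D_vw], [B_ψ₂]], B̃_d = [[B_d], [B_ψ₁ D_vd], [0]], C̃_v = [D_ψ₁ C_v, C_ψ₁, 0], D̃_vw = D_ψ₁ D_vw, D̃_vd = D_ψ₁ D_vd, C̃_e = [C_e, 0, 0], D̃_ew = D_ew, D̃_ed = D_ed, and the transformation matrix T = [[I, 0, 0], [[0, 0, −D_ψ₂⁻¹C_ψ₂], D_ψ₂⁻¹, 0], [0, 0, I]]. Suppose a symmetric positive semidefinite P (acting on the extended state x̃ = (x, ψ₁, ψ₂)) and λ ≥ 0 satisfy the dissipativity LMI condition for the transformed system matrices [Ã, B̃_w, B̃_d; C̃_v, D̃_vw, D̃_vd; C̃_e,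 D̃_ew, D̃_ed]·T, with multiplier M = diag(I, −I) and supply-rate matrix X. Then for every extended admissible trajectory, i.e., continuously differentiable x, ψ₁, ψ₂ and continuous w, d with x'(t) = A x(t) + B_w w(t) + B_d d(t), ψ₁'(t) = A_ψ₁ ψ₁(t) + B_ψ₁ v(t), ψ₂'(t) = A_ψ₂ ψ₂(t) + B_ψ₂ w(t), ψ₁(0) = 0, ψ₂(0) = 0, where v(t) = C_v x(t) + D_vw w(t) + D_vd d(t), e(t) = C_e x(t) + D_ew w(t) + D_ed d(t), ṽ(t) = C_ψ₁ ψ₁(t) + D_ψ₁ v(t), w̃(t) = C_ψ₂ ψ₂(t) + D_ψ₂ w(t), such that the dynamic IQC holds, namely ∫₀ᵀ (‖ṽ(t)‖² − ‖w̃(t)‖²) dt ≥ 0 for all T ≥ 0, one has x̃(T)ᵀ P x̃(T) − x̃(0)ᵀ P x̃(0) ≤ ∫₀ᵀ [d(t); e(t)]ᵀ X [d(t); e(t)] dt for all T ≥ 0, where x̃(t) = (x(t), ψ₁(t), ψ₂(t)). Thus the original system is dissipative with respect to the supply rate defined by X, with storage function defined on the state consisting of the plant state and the virtual filter state. -/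

import Mathlib

open Matrix

/-- Negative semidefiniteness of a real matrix: `zᵀ N z ≤ 0` for all `z`. -/
def IsNegSemidef {m : Type*} [Fintype m] (N : Matrix m m ℝ) : Prop :=
  ∀ z : m → ℝ, z ⬝ᵥ N *ᵥ z ≤ 0

/-- The dissipativity LMI condition
`[[AᵀP + PA, P Bw, P Bd], [Bwᵀ P, 0, 0], [Bdᵀ P, 0, 0]] + λ Hᵀ M H − Gᵀ X G ⪯ 0` with
`H = [[Cv, Dvw, Dvd], [0, I, 0]]` and `G = [[0, 0, I], [Ce, Dew, Ded]]`. -/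
def DissLMI {ιn ιw ιd ιv ιe : Type*} [Fintype ιn] [Fintype ιw] [Fintype ιd]
    [Fintype ιv] [Fintype ιe] [DecidableEq ιw] [DecidableEq ιd]
    (A : Matrix ιn ιn ℝ) (Bw : Matrix ιn ιw ℝ) (Bd : Matrix ιn ιd ℝ)
    (Cv : Matrix ιv ιn ℝ) (Dvw : Matrix ιv ιw ℝ) (Dvd : Matrix ιv ιd ℝ)
    (Ce : Matrix ιe ιn ℝ) (Dew : Matrix ιe ιw ℝ) (Ded : Matrix ιe ιd ℝ)
    (P : Matrix ιn ιn ℝ) (lam : ℝ)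
    (M : Matrix (ιv ⊕ ιw) (ιv ⊕ ιw) ℝ)
    (X : Matrix (ιd ⊕ ιe) (ιd ⊕ ιe) ℝ) : Prop :=
  let H : Matrix (ιv ⊕ ιw) (ιn ⊕ (ιw ⊕ ιd)) ℝ :=
    fromBlocks Cv (fromCols Dvw Dvd) 0 (fromCols 1 0)
  let G : Matrix (ιd ⊕ ιe) (ιn ⊕ (ιw ⊕ ιd)) ℝ :=
    fromBlocks 0 (fromCols 0 1) Ce (fromCols Dew Ded)
  let F0 : Matrix (ιn ⊕ (ιw ⊕ ιd)) (ιn ⊕ (ιw ⊕ ιd)) ℝ :=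
    fromBlocks (Aᵀ * P + P * A) (fromCols (P * Bw) (P * Bd))
      (fromRows (Bwᵀ * P) (Bdᵀ * P)) 0
  IsNegSemidef (F0 + lam • (Hᵀ * M * H) - Gᵀ * X * G)

/-!
Write `x̃ = (x, ψ₁, ψ₂)`. Right multiplication of the data by the transformation matrix is the
change of input `w = D_ψ₂⁻¹ (w̃ - C_ψ₂ ψ₂)`, under which the transformed extended system driven
by `(w̃, d)` has state `x̃`, filter output `ṽ` and performance output `e`. Evaluating the LMI at `(x̃, w̃, d)`
therefore gives, at every time,
`d/dt (x̃ᵀ P x̃) + λ (‖ṽ‖² - ‖w̃‖²) ≤ [d; e]ᵀ X [d; e]`,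
and integrating over `[0, T]` with `λ ≥ 0` and the IQC `∫ (‖ṽ‖² - ‖w̃‖²) ≥ 0` gives the claim.
-/

open Set MeasureTheory

section Calculus

variable {𝕜 ι κ : Type*} [NontriviallyNormedField 𝕜] {u : 𝕜 → ι → 𝕜} {u' : ι → 𝕜} {s : Set 𝕜}
  {t : 𝕜}

theorem HasDerivWithinAt.sumElim {v : 𝕜 → κ → 𝕜} {v' : κ → 𝕜}
    (hu : HasDerivWithinAt u u' s t) (hv : HasDerivWithinAt v v' s t) :
    HasDerivWithinAt (fun t => u t ⊕ᵥ v t) (u' ⊕ᵥ v') s t := by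
  rw [hasDerivWithinAt_pi] at hu hv ⊢
  rintro (i | i)
  exacts [hu i, hv i]

variable [Fintype ι] [Fintype κ]

theorem HasDerivWithinAt.matrix_mulVec [CompleteSpace 𝕜] (M : Matrix κ ι 𝕜)
    (hu : HasDerivWithinAt u u' s t) : HasDerivWithinAt (fun t => M *ᵥ u t) (M *ᵥ u') s t :=
  (LinearMap.toContinuousLinearMap (mulVecLin M)).hasFDerivAt.comp_hasDerivWithinAt t hu

theorem HasDerivWithinAt.dotProduct {v : 𝕜 → ι → 𝕜} {v' : ι → 𝕜}
    (hu : HasDerivWithinAt u u' s t) (hv : HasDerivWithinAt v v' s t) :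
    HasDerivWithinAt (fun t => u t ⬝ᵥ v t) (u' ⬝ᵥ v t + u t ⬝ᵥ v') s t := by
  simp only [_root_.dotProduct, ← Finset.sum_add_distrib]
  exact HasDerivWithinAt.fun_sum fun i _ =>
    (hasDerivWithinAt_pi.1 hu i).mul (hasDerivWithinAt_pi.1 hv i)

end Calculus

section Continuity

variable {X R ι κ : Type*} [TopologicalSpace X] [TopologicalSpace R] {s : Set X}

@[fun_prop]
theorem ContinuousOn.sumElim {f : X → ι → R} {g : X → κ → R}
    (hf : ContinuousOn f s) (hg : ContinuousOn g s) :
    ContinuousOn (fun x => f x ⊕ᵥ g x) s := by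
  rw [continuousOn_pi] at hf hg ⊢
  rintro (i | i)
  exacts [hf i, hg i]

@[fun_prop]
theorem ContinuousOn.dotProduct [Fintype ι] [Mul R] [AddCommMonoid R] [ContinuousAdd R]
    [ContinuousMul R] {f g : X → ι → R} (hf : ContinuousOn f s) (hg : ContinuousOn g s) :
    ContinuousOn (fun x => f x ⬝ᵥ g x) s :=
  (continuous_fst.dotProduct continuous_snd).comp_continuousOn (hf.prodMk hg)

end Continuity

theorem sub_le_integral_of_hasDeriv_right_of_add_mul_le {V V' s q : ℝ → ℝ} {a b lam : ℝ}
    (hab : a ≤ b) (hlam : 0 ≤ lam) (hV : ContinuousOn V (Icc a b))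
    (hV' : ∀ t ∈ Ioo a b, HasDerivWithinAt V (V' t) (Ioi t) t)
    (hs : IntegrableOn s (Icc a b)) (hq : IntegrableOn q (Icc a b))
    (hdiss : ∀ t ∈ Ioo a b, V' t + lam * q t ≤ s t) (hq_nonneg : 0 ≤ ∫ t in a..b, q t) :
    V b - V a ≤ ∫ t in a..b, s t := by
  have hs' := (intervalIntegrable_iff_integrableOn_Icc_of_le hab).2 hs
  have hq' := ((intervalIntegrable_iff_integrableOn_Icc_of_le hab).2 hq).const_mul lam
  calc V b - V a ≤ ∫ t in a..b, (s t - lam * q t) :=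
        intervalIntegral.sub_le_integral_of_hasDeriv_right_of_le hab hV hV'
          (hs.sub (hq.const_mul lam)) fun t ht => le_sub_iff_add_le.2 (hdiss t ht)
    _ = (∫ t in a..b, s t) - lam * ∫ t in a..b, q t := by
        rw [intervalIntegral.integral_sub hs' hq', intervalIntegral.integral_const_mul]
    _ ≤ ∫ t in a..b, s t := sub_le_self _ (mul_nonneg hlam hq_nonneg)

section QuadraticForms

variable {R k l : Type*} [Fintype k] [Fintype l]

theorem dotProduct_transpose_mul_mul_mulVec [CommSemiring R] (H : Matrix k l R) (M : Matrix k k R)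
    (z : l → R) : z ⬝ᵥ (Hᵀ * M * H) *ᵥ z = (H *ᵥ z) ⬝ᵥ M *ᵥ (H *ᵥ z) := by
  rw [Matrix.mul_assoc, ← mulVec_mulVec, dotProduct_transpose_mulVec, ← mulVec_mulVec,
    dotProduct_comm]

theorem sumElim_dotProduct_fromBlocks_one_neg_one_mulVec [Ring R] [DecidableEq k] [DecidableEq l]
    (a : k → R) (b : l → R) :
    (a ⊕ᵥ b) ⬝ᵥ fromBlocks 1 0 0 (-1) *ᵥ (a ⊕ᵥ b) = a ⬝ᵥ a - b ⬝ᵥ b := by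
  simp [fromBlocks_mulVec, sub_eq_add_neg, neg_mulVec]

end QuadraticForms

theorem add_mul_mulVec_add_mul_mulVec_of_eq {R ιn ιw ιw' κ : Type*} [NonUnitalSemiring R]
    [Fintype ιn] [Fintype ιw] [Fintype ιw'] {J : Matrix ιw ιn R} {K : Matrix ιw ιw' R}
    (F : Matrix κ ιn R) (G : Matrix κ ιw R) {x : ιn → R} {w' : ιw' → R} {w : ιw → R}
    (hw : J *ᵥ x + K *ᵥ w' = w) :
    (F + G * J) *ᵥ x + (G * K) *ᵥ w' = F *ᵥ x + G *ᵥ w := by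
  rw [add_mulVec, ← mulVec_mulVec, ← mulVec_mulVec, add_assoc, ← mulVec_add, hw]

namespace DissLMI

variable {ιn ιw ιw' ιd ιv ιe : Type*} [Fintype ιn] [Fintype ιw] [Fintype ιw'] [Fintype ιd]
  [Fintype ιv] [Fintype ιe] [DecidableEq ιd]
  {A : Matrix ιn ιn ℝ} {Bw : Matrix ιn ιw ℝ} {Bd : Matrix ιn ιd ℝ}
  {Cv : Matrix ιv ιn ℝ} {Dvw : Matrix ιv ιw ℝ} {Dvd : Matrix ιv ιd ℝ}
  {Ce : Matrix ιe ιn ℝ} {Dew : Matrix ιe ιw ℝ} {Ded : Matrix ιe ιd ℝ}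
  {P : Matrix ιn ιn ℝ} {lam : ℝ} {X : Matrix (ιd ⊕ ιe) (ιd ⊕ ιe) ℝ}

theorem quadratic_le [DecidableEq ιw] {M : Matrix (ιv ⊕ ιw) (ιv ⊕ ιw) ℝ}
    (h : DissLMI A Bw Bd Cv Dvw Dvd Ce Dew Ded P lam M X) (x : ιn → ℝ) (w : ιw → ℝ) (d : ιd → ℝ) :
    (A *ᵥ x + Bw *ᵥ w + Bd *ᵥ d) ⬝ᵥ P *ᵥ x + x ⬝ᵥ P *ᵥ (A *ᵥ x + Bw *ᵥ w + Bd *ᵥ d)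
      + lam * ((Cv *ᵥ x + Dvw *ᵥ w + Dvd *ᵥ d) ⊕ᵥ w) ⬝ᵥ M *ᵥ ((Cv *ᵥ x + Dvw *ᵥ w + Dvd *ᵥ d) ⊕ᵥ w)
      ≤ (d ⊕ᵥ (Ce *ᵥ x + Dew *ᵥ w + Ded *ᵥ d)) ⬝ᵥ X *ᵥ (d ⊕ᵥ (Ce *ᵥ x + Dew *ᵥ w + Ded *ᵥ d)) := by
  have hz := h (x ⊕ᵥ (w ⊕ᵥ d))
  simp only [sub_mulVec, add_mulVec, smul_mulVec, dotProduct_sub, dotProduct_add, dotProduct_smul,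
    smul_eq_mul, dotProduct_transpose_mul_mul_mulVec, fromBlocks_mulVec, Sum.elim_comp_inl,
    Sum.elim_comp_inr, fromCols_mulVec_sumElim, fromRows_mulVec, zero_mulVec, add_zero, zero_add,
    one_mulVec, sumElim_dotProduct_sumElim] at hz
  simp only [← mulVec_mulVec, dotProduct_transpose_mulVec, ← add_assoc] at hz
  simp only [mulVec_add, dotProduct_add, dotProduct_comm _ (P *ᵥ x)]
  linarith

theorem quadratic_le_of_loopTransform [DecidableEq ιw'] {M : Matrix (ιv ⊕ ιw') (ιv ⊕ ιw') ℝ}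
    {J : Matrix ιw ιn ℝ} {K : Matrix ιw ιw' ℝ}
    (h : DissLMI (A + Bw * J) (Bw * K) Bd (Cv + Dvw * J) (Dvw * K) Dvd (Ce + Dew * J) (Dew * K) Ded
      P lam M X)
    (x : ιn → ℝ) (w' : ιw' → ℝ) (d : ιd → ℝ) {w : ιw → ℝ} (hw : J *ᵥ x + K *ᵥ w' = w) :
    (A *ᵥ x + Bw *ᵥ w + Bd *ᵥ d) ⬝ᵥ P *ᵥ x + x ⬝ᵥ P *ᵥ (A *ᵥ x + Bw *ᵥ w + Bd *ᵥ d)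
      + lam * ((Cv *ᵥ x + Dvw *ᵥ w + Dvd *ᵥ d) ⊕ᵥ w') ⬝ᵥ M *ᵥ ((Cv *ᵥ x + Dvw *ᵥ w + Dvd *ᵥ d) ⊕ᵥ w')
      ≤ (d ⊕ᵥ (Ce *ᵥ x + Dew *ᵥ w + Ded *ᵥ d)) ⬝ᵥ X *ᵥ (d ⊕ᵥ (Ce *ᵥ x + Dew *ᵥ w + Ded *ᵥ d)) := by
  simpa only [add_mul_mulVec_add_mul_mulVec_of_eq _ _ hw] using h.quadratic_le x w' d

end DissLMI

section Extended

variable {R ιn ιp1 ιp2 ιw ιd ιv ιz : Type*} [CommRing R] [Fintype ιn] [Fintype ιp1]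
  [Fintype ιp2] [Fintype ιw] [Fintype ιd] [Fintype ιv]
  (x : ιn → R) (ψ1 : ιp1 → R) (ψ2 : ιp2 → R) (w : ιw → R) (d : ιd → R)

theorem extended_state_mulVec (A : Matrix ιn ιn R) (Bw : Matrix ιn ιw R) (Bd : Matrix ιn ιd R)
    (Cv : Matrix ιv ιn R) (Dvw : Matrix ιv ιw R) (Dvd : Matrix ιv ιd R)
    (Aψ1 : Matrix ιp1 ιp1 R) (Bψ1 : Matrix ιp1 ιv R) (Aψ2 : Matrix ιp2 ιp2 R)
    (Bψ2 : Matrix ιp2 ιw R) :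
    fromBlocks A 0 (fromRows (Bψ1 * Cv) 0) (fromBlocks Aψ1 0 0 Aψ2) *ᵥ (x ⊕ᵥ (ψ1 ⊕ᵥ ψ2))
      + fromRows Bw (fromRows (Bψ1 * Dvw) Bψ2) *ᵥ w + fromRows Bd (fromRows (Bψ1 * Dvd) 0) *ᵥ d
      = (A *ᵥ x + Bw *ᵥ w + Bd *ᵥ d) ⊕ᵥ
          ((Aψ1 *ᵥ ψ1 + Bψ1 *ᵥ (Cv *ᵥ x + Dvw *ᵥ w + Dvd *ᵥ d)) ⊕ᵥ (Aψ2 *ᵥ ψ2 + Bψ2 *ᵥ w)) := by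
  ext (i | i | i)
  · simp [fromBlocks_mulVec, fromRows_mulVec]
  · simp only [fromBlocks_mulVec, fromRows_mulVec, Sum.elim_comp_inl, Sum.elim_comp_inr,
      zero_mulVec, add_zero, zero_add, ← mulVec_mulVec, mulVec_add, Pi.add_apply, Sum.elim_inr,
      Sum.elim_inl]
    ring
  · simp [fromBlocks_mulVec, fromRows_mulVec]

theorem extended_output_mulVec (Cv : Matrix ιv ιn R) (Dvw : Matrix ιv ιw R)
    (Dvd : Matrix ιv ιd R) (Cψ1 : Matrix ιz ιp1 R) (Dψ1 : Matrix ιz ιv R) :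
    fromCols (Dψ1 * Cv) (fromCols Cψ1 0) *ᵥ (x ⊕ᵥ (ψ1 ⊕ᵥ ψ2)) + (Dψ1 * Dvw) *ᵥ w
        + (Dψ1 * Dvd) *ᵥ d
      = Cψ1 *ᵥ ψ1 + Dψ1 *ᵥ (Cv *ᵥ x + Dvw *ᵥ w + Dvd *ᵥ d) := by
  simp only [fromCols_mulVec_sumElim, zero_mulVec, add_zero, ← mulVec_mulVec, mulVec_add]
  abel

theorem loopTransform_input_eq [DecidableEq ιw] {Cψ2 : Matrix ιw ιp2 R} {Dψ2 : Matrix ιw ιw R}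
    (hD : IsUnit Dψ2.det) :
    fromCols 0 (fromCols 0 (-(Dψ2⁻¹ * Cψ2))) *ᵥ (x ⊕ᵥ (ψ1 ⊕ᵥ ψ2))
        + Dψ2⁻¹ *ᵥ (Cψ2 *ᵥ ψ2 + Dψ2 *ᵥ w)
      = w := by
  simp [mulVec_add, mulVec_mulVec, nonsing_inv_mul _ hD, neg_mulVec]

end Extended

theorem statement5_general {n nw nd nv ne np1 np2 nz : ℕ}
    (A : Matrix (Fin n) (Fin n) ℝ) (Bw : Matrix (Fin n) (Fin nw) ℝ)
    (Bd : Matrix (Fin n) (Fin nd) ℝ)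
    (Cv : Matrix (Fin nv) (Fin n) ℝ) (Dvw : Matrix (Fin nv) (Fin nw) ℝ)
    (Dvd : Matrix (Fin nv) (Fin nd) ℝ)
    (Ce : Matrix (Fin ne) (Fin n) ℝ) (Dew : Matrix (Fin ne) (Fin nw) ℝ)
    (Ded : Matrix (Fin ne) (Fin nd) ℝ)
    (Aψ1 : Matrix (Fin np1) (Fin np1) ℝ) (Bψ1 : Matrix (Fin np1) (Fin nv) ℝ)
    (Cψ1 : Matrix (Fin nz) (Fin np1) ℝ) (Dψ1 : Matrix (Fin nz) (Fin nv) ℝ)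
    (Aψ2 : Matrix (Fin np2) (Fin np2) ℝ) (Bψ2 : Matrix (Fin np2) (Fin nw) ℝ)
    (Cψ2 : Matrix (Fin nw) (Fin np2) ℝ) (Dψ2 : Matrix (Fin nw) (Fin nw) ℝ)
    (hD2 : IsUnit Dψ2.det)
    (P : Matrix (Fin n ⊕ (Fin np1 ⊕ Fin np2)) (Fin n ⊕ (Fin np1 ⊕ Fin np2)) ℝ)
    (lam : ℝ) (X : Matrix (Fin nd ⊕ Fin ne) (Fin nd ⊕ Fin ne) ℝ)
    (hlam : 0 ≤ lam)
    (hLMI :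
      let Atil : Matrix (Fin n ⊕ (Fin np1 ⊕ Fin np2)) (Fin n ⊕ (Fin np1 ⊕ Fin np2)) ℝ :=
        fromBlocks A 0 (fromRows (Bψ1 * Cv) 0) (fromBlocks Aψ1 0 0 Aψ2)
      let Bwtil : Matrix (Fin n ⊕ (Fin np1 ⊕ Fin np2)) (Fin nw) ℝ :=
        fromRows Bw (fromRows (Bψ1 * Dvw) Bψ2)
      let Bdtil : Matrix (Fin n ⊕ (Fin np1 ⊕ Fin np2)) (Fin nd) ℝ :=
        fromRows Bd (fromRows (Bψ1 * Dvd) 0)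
      let Cvtil : Matrix (Fin nz) (Fin n ⊕ (Fin np1 ⊕ Fin np2)) ℝ :=
        fromCols (Dψ1 * Cv) (fromCols Cψ1 0)
      let Cetil : Matrix (Fin ne) (Fin n ⊕ (Fin np1 ⊕ Fin np2)) ℝ :=
        fromCols Ce 0
      let J : Matrix (Fin nw) (Fin n ⊕ (Fin np1 ⊕ Fin np2)) ℝ :=
        fromCols 0 (fromCols 0 (-(Dψ2⁻¹ * Cψ2)))
      DissLMI (Atil + Bwtil * J) (Bwtil * Dψ2⁻¹) Bdtil
        (Cvtil + (Dψ1 * Dvw) * J) ((Dψ1 * Dvw) * Dψ2⁻¹) (Dψ1 * Dvd)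
        (Cetil + Dew * J) (Dew * Dψ2⁻¹) Ded P lam
        (fromBlocks (1 : Matrix (Fin nz) (Fin nz) ℝ) 0 0
          (-(1 : Matrix (Fin nw) (Fin nw) ℝ))) X)
    (x : ℝ → Fin n → ℝ) (ψ1 : ℝ → Fin np1 → ℝ) (ψ2 : ℝ → Fin np2 → ℝ)
    (w : ℝ → Fin nw → ℝ) (d : ℝ → Fin nd → ℝ)
    (v : ℝ → Fin nv → ℝ) (e : ℝ → Fin ne → ℝ)
    (vtil : ℝ → Fin nz → ℝ) (wtil : ℝ → Fin nw → ℝ)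
    (hw : ContinuousOn w (Set.Ici 0)) (hd : ContinuousOn d (Set.Ici 0))
    (hx : ∀ t ∈ Set.Ici (0:ℝ),
      HasDerivWithinAt x (A *ᵥ x t + Bw *ᵥ w t + Bd *ᵥ d t) (Set.Ici 0) t)
    (hψ1 : ∀ t ∈ Set.Ici (0:ℝ),
      HasDerivWithinAt ψ1 (Aψ1 *ᵥ ψ1 t + Bψ1 *ᵥ v t) (Set.Ici 0) t)
    (hψ2 : ∀ t ∈ Set.Ici (0:ℝ),
      HasDerivWithinAt ψ2 (Aψ2 *ᵥ ψ2 t + Bψ2 *ᵥ w t) (Set.Ici 0) t)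
    (hv : ∀ t, v t = Cv *ᵥ x t + Dvw *ᵥ w t + Dvd *ᵥ d t)
    (he : ∀ t, e t = Ce *ᵥ x t + Dew *ᵥ w t + Ded *ᵥ d t)
    (hvtil : ∀ t, vtil t = Cψ1 *ᵥ ψ1 t + Dψ1 *ᵥ v t)
    (hwtil : ∀ t, wtil t = Cψ2 *ᵥ ψ2 t + Dψ2 *ᵥ w t)
    (hIQC : ∀ T, 0 ≤ T →
      0 ≤ ∫ t in (0:ℝ)..T, (vtil t ⬝ᵥ vtil t - wtil t ⬝ᵥ wtil t)) :
    ∀ T, 0 ≤ T →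
      Sum.elim (x T) (Sum.elim (ψ1 T) (ψ2 T)) ⬝ᵥ
          P *ᵥ Sum.elim (x T) (Sum.elim (ψ1 T) (ψ2 T))
        - Sum.elim (x 0) (Sum.elim (ψ1 0) (ψ2 0)) ⬝ᵥ
            P *ᵥ Sum.elim (x 0) (Sum.elim (ψ1 0) (ψ2 0)) ≤
        ∫ t in (0:ℝ)..T, Sum.elim (d t) (e t) ⬝ᵥ X *ᵥ Sum.elim (d t) (e t) := by
  intro T hT
  set xt : ℝ → Fin n ⊕ (Fin np1 ⊕ Fin np2) → ℝ := fun t => x t ⊕ᵥ (ψ1 t ⊕ᵥ ψ2 t)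
  set xd : ℝ → Fin n ⊕ (Fin np1 ⊕ Fin np2) → ℝ := fun t =>
    (A *ᵥ x t + Bw *ᵥ w t + Bd *ᵥ d t) ⊕ᵥ ((Aψ1 *ᵥ ψ1 t + Bψ1 *ᵥ v t) ⊕ᵥ (Aψ2 *ᵥ ψ2 t + Bψ2 *ᵥ w t))
  have hxt : ∀ t ∈ Ici (0 : ℝ), HasDerivWithinAt xt (xd t) (Ici 0) t := fun t ht =>
    (hx t ht).sumElim ((hψ1 t ht).sumElim (hψ2 t ht))
  have hstorage : ∀ t ∈ Ici (0 : ℝ), HasDerivWithinAt (fun t => xt t ⬝ᵥ P *ᵥ xt t)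
      (xd t ⬝ᵥ P *ᵥ xt t + xt t ⬝ᵥ P *ᵥ xd t) (Ici 0) t := fun t ht =>
    (hxt t ht).dotProduct ((hxt t ht).matrix_mulVec P)
  have hdiss : ∀ t, xd t ⬝ᵥ P *ᵥ xt t + xt t ⬝ᵥ P *ᵥ xd t
      + lam * (vtil t ⬝ᵥ vtil t - wtil t ⬝ᵥ wtil t)
      ≤ (d t ⊕ᵥ e t) ⬝ᵥ X *ᵥ (d t ⊕ᵥ e t) := by
    intro t
    have hinput : fromCols 0 (fromCols 0 (-(Dψ2⁻¹ * Cψ2))) *ᵥ xt t + Dψ2⁻¹ *ᵥ wtil t = w t := by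
      rw [hwtil]; exact loopTransform_input_eq (x t) (ψ1 t) (ψ2 t) (w t) hD2
    have h := hLMI.quadratic_le_of_loopTransform (xt t) (wtil t) (d t) hinput
    rwa [extended_state_mulVec, extended_output_mulVec, fromCols_mulVec_sumElim, zero_mulVec,
      add_zero, ← hv t, ← he t, ← hvtil t, sumElim_dotProduct_fromBlocks_one_neg_one_mulVec] at h
  have hxc : ContinuousOn x (Ici 0) := fun t ht => (hx t ht).continuousWithinAt
  have hψ1c : ContinuousOn ψ1 (Ici 0) := fun t ht => (hψ1 t ht).continuousWithinAt
  have hψ2c : ContinuousOn ψ2 (Ici 0) := fun t ht => (hψ2 t ht).continuousWithinAt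
  have hsupply : ContinuousOn (fun t => (d t ⊕ᵥ e t) ⬝ᵥ X *ᵥ (d t ⊕ᵥ e t)) (Ici 0) := by
    rw [funext he]; fun_prop
  have hiqc : ContinuousOn (fun t => vtil t ⬝ᵥ vtil t - wtil t ⬝ᵥ wtil t) (Ici 0) := by
    rw [funext hvtil, funext hwtil, funext hv]; fun_prop
  refine sub_le_integral_of_hasDeriv_right_of_add_mul_le hT hlam
    (fun t ht => ((hstorage t ht.1).continuousWithinAt).mono Icc_subset_Ici_self)
    (fun t ht => (hstorage t ht.1.le).mono (Ioi_subset_Ici_self.trans (Ici_subset_Ici.2 ht.1.le)))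
    ((hsupply.mono Icc_subset_Ici_self).integrableOn_Icc)
    ((hiqc.mono Icc_subset_Ici_self).integrableOn_Icc) (fun t _ => hdiss t) (hIQC T hT)

/-- dissipativity via dynamic IQCs. If the dissipativity LMI holds
for the extended and transformed system (extended with the filters `Ψ₁`, `Ψ₂`
and transformed by `T`), with multiplier `M = diag(I, −I)`, then the original
system with uncertainty satisfying the dynamic IQC is dissipative with respect
to the supply rate defined by `X`, with storage on the extended state. -/
theorem statement5 {n nw nd nv ne np1 np2 nz : ℕ}
    (A : Matrix (Fin n) (Fin n) ℝ) (Bw : Matrix (Fin n) (Fin nw) ℝ)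
    (Bd : Matrix (Fin n) (Fin nd) ℝ)
    (Cv : Matrix (Fin nv) (Fin n) ℝ) (Dvw : Matrix (Fin nv) (Fin nw) ℝ)
    (Dvd : Matrix (Fin nv) (Fin nd) ℝ)
    (Ce : Matrix (Fin ne) (Fin n) ℝ) (Dew : Matrix (Fin ne) (Fin nw) ℝ)
    (Ded : Matrix (Fin ne) (Fin nd) ℝ)
    (Aψ1 : Matrix (Fin np1) (Fin np1) ℝ) (Bψ1 : Matrix (Fin np1) (Fin nv) ℝ)
    (Cψ1 : Matrix (Fin nz) (Fin np1) ℝ) (Dψ1 : Matrix (Fin nz) (Fin nv) ℝ)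
    (Aψ2 : Matrix (Fin np2) (Fin np2) ℝ) (Bψ2 : Matrix (Fin np2) (Fin nw) ℝ)
    (Cψ2 : Matrix (Fin nw) (Fin np2) ℝ) (Dψ2 : Matrix (Fin nw) (Fin nw) ℝ)
    (hD2 : IsUnit Dψ2.det)
    (P : Matrix (Fin n ⊕ (Fin np1 ⊕ Fin np2)) (Fin n ⊕ (Fin np1 ⊕ Fin np2)) ℝ)
    (lam : ℝ) (X : Matrix (Fin nd ⊕ Fin ne) (Fin nd ⊕ Fin ne) ℝ)
    (hP : P.PosSemidef) (hlam : 0 ≤ lam) (hX : X.IsSymm)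
    (hLMI :
      let Atil : Matrix (Fin n ⊕ (Fin np1 ⊕ Fin np2)) (Fin n ⊕ (Fin np1 ⊕ Fin np2)) ℝ :=
        fromBlocks A 0 (fromRows (Bψ1 * Cv) 0) (fromBlocks Aψ1 0 0 Aψ2)
      let Bwtil : Matrix (Fin n ⊕ (Fin np1 ⊕ Fin np2)) (Fin nw) ℝ :=
        fromRows Bw (fromRows (Bψ1 * Dvw) Bψ2)
      let Bdtil : Matrix (Fin n ⊕ (Fin np1 ⊕ Fin np2)) (Fin nd) ℝ :=
        fromRows Bd (fromRows (Bψ1 * Dvd) 0)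
      let Cvtil : Matrix (Fin nz) (Fin n ⊕ (Fin np1 ⊕ Fin np2)) ℝ :=
        fromCols (Dψ1 * Cv) (fromCols Cψ1 0)
      let Cetil : Matrix (Fin ne) (Fin n ⊕ (Fin np1 ⊕ Fin np2)) ℝ :=
        fromCols Ce 0
      let J : Matrix (Fin nw) (Fin n ⊕ (Fin np1 ⊕ Fin np2)) ℝ :=
        fromCols 0 (fromCols 0 (-(Dψ2⁻¹ * Cψ2)))
      DissLMI (Atil + Bwtil * J) (Bwtil * Dψ2⁻¹) Bdtil
        (Cvtil + (Dψ1 * Dvw) * J) ((Dψ1 * Dvw) * Dψ2⁻¹) (Dψ1 * Dvd)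
        (Cetil + Dew * J) (Dew * Dψ2⁻¹) Ded P lam
        (fromBlocks (1 : Matrix (Fin nz) (Fin nz) ℝ) 0 0
          (-(1 : Matrix (Fin nw) (Fin nw) ℝ))) X)
    (x : ℝ → Fin n → ℝ) (ψ1 : ℝ → Fin np1 → ℝ) (ψ2 : ℝ → Fin np2 → ℝ)
    (w : ℝ → Fin nw → ℝ) (d : ℝ → Fin nd → ℝ)
    (v : ℝ → Fin nv → ℝ) (e : ℝ → Fin ne → ℝ)
    (vtil : ℝ → Fin nz → ℝ) (wtil : ℝ → Fin nw → ℝ)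
    (hw : ContinuousOn w (Set.Ici 0)) (hd : ContinuousOn d (Set.Ici 0))
    (hx : ∀ t ∈ Set.Ici (0:ℝ),
      HasDerivWithinAt x (A *ᵥ x t + Bw *ᵥ w t + Bd *ᵥ d t) (Set.Ici 0) t)
    (hψ1 : ∀ t ∈ Set.Ici (0:ℝ),
      HasDerivWithinAt ψ1 (Aψ1 *ᵥ ψ1 t + Bψ1 *ᵥ v t) (Set.Ici 0) t)
    (hψ2 : ∀ t ∈ Set.Ici (0:ℝ),
      HasDerivWithinAt ψ2 (Aψ2 *ᵥ ψ2 t + Bψ2 *ᵥ w t) (Set.Ici 0) t)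
    (hψ10 : ψ1 0 = 0) (hψ20 : ψ2 0 = 0)
    (hv : ∀ t, v t = Cv *ᵥ x t + Dvw *ᵥ w t + Dvd *ᵥ d t)
    (he : ∀ t, e t = Ce *ᵥ x t + Dew *ᵥ w t + Ded *ᵥ d t)
    (hvtil : ∀ t, vtil t = Cψ1 *ᵥ ψ1 t + Dψ1 *ᵥ v t)
    (hwtil : ∀ t, wtil t = Cψ2 *ᵥ ψ2 t + Dψ2 *ᵥ w t)
    (hIQC : ∀ T, 0 ≤ T →
      0 ≤ ∫ t in (0:ℝ)..T, (vtil t ⬝ᵥ vtil t - wtil t ⬝ᵥ wtil t)) :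
    ∀ T, 0 ≤ T →
      Sum.elim (x T) (Sum.elim (ψ1 T) (ψ2 T)) ⬝ᵥ
          P *ᵥ Sum.elim (x T) (Sum.elim (ψ1 T) (ψ2 T))
        - Sum.elim (x 0) (Sum.elim (ψ1 0) (ψ2 0)) ⬝ᵥ
            P *ᵥ Sum.elim (x 0) (Sum.elim (ψ1 0) (ψ2 0)) ≤
        ∫ t in (0:ℝ)..T, Sum.elim (d t) (e t) ⬝ᵥ X *ᵥ Sum.elim (d t) (e t) :=
  statement5_general A Bw Bd Cv Dvw Dvd Ce Dew Ded Aψ1 Bψ1 Cψ1 Dψ1 Aψ2 Bψ2 Cψ2 Dψ2 hD2 P lam X hlam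
    hLMI x ψ1 ψ2 w d v e vtil wtil hw hd hx hψ1 hψ2 hv he hvtil hwtil hIQC
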